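/- arXiv:2107.08626 — 6 statements merged into one kernel-verified Lean document; each statement's English description precedes it below -/
import Mathlib

section
/- Let n ≥ 3, let v : Fin n → ℝ be injective (pairwise distinct velocity nodes), let h : Fin n → ℝ satisfy h_j > 0 for all j, and let Δv > 0. Let C be the 3×n real matrix whose rows are (h_j Δv)_j, (h_j v_j Δv)_j and (h_j v_j²/2 · Δv)_j. Then the 3×3 matrix C·Cᵀ is symmetric and positive definite; in particular C·Cᵀ is invertible. -/
/-!
`C * Cᵀ` is a Gram matrix, so it is positive definite as soon as `x ↦ x ᵥ* C` is injective.
The `j`-th entry of `x ᵥ* C` is `h j Δv` times the quadratic `x₀ + x₁ t + (x₂/2) t²` at `t = v j`;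
a quadratic vanishing at three distinct nodes is zero, so `x = 0`.
-/

open Matrix Polynomial

theorem quadratic_coeffs_eq_zero_of_eval_eq_zero {R ι : Type*} [CommRing R] [IsDomain R]
    [Fintype ι] (hι : 3 ≤ Fintype.card ι) {t : ι → R} (ht : Function.Injective t) {a b c : R}
    (hroot : ∀ i, a + b * t i + c * t i ^ 2 = 0) : a = 0 ∧ b = 0 ∧ c = 0 := by
  set p : R[X] := C a + C b * X + C c * X ^ 2
  have hp : p = 0 := by
    refine eq_zero_of_natDegree_lt_card_of_eval_eq_zero p ht (fun i => ?_) ?_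
    · simpa [p] using hroot i
    · have : p.natDegree ≤ 2 := by simp only [p]; compute_degree
      omega
  refine ⟨?_, ?_, ?_⟩
  · simpa [p] using congrArg (coeff · 0) hp
  · simpa [p] using congrArg (coeff · 1) hp
  · simpa [p] using congrArg (coeff · 2) hp

theorem vecMul_injective_of_moment_rows {ι : Type*} [Fintype ι] (hι : 3 ≤ Fintype.card ι)
    {v : ι → ℝ} (hv : Function.Injective v) {w : ι → ℝ} (hw : ∀ j, w j ≠ 0) :
    Function.Injective (fun x : Fin 3 → ℝ =>
      x ᵥ* Matrix.of fun i j => w j * ![(1 : ℝ), v j, v j ^ 2 / 2] i) := by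
  refine (injective_iff_map_eq_zero (vecMulLinear _)).2 fun x hx => ?_
  have hroot : ∀ j, x 0 + x 1 * v j + x 2 / 2 * v j ^ 2 = 0 := fun j => by
    have hj := congrFun hx j
    simp only [vecMulLinear_apply, vecMul, dotProduct, Fin.sum_univ_three, of_apply,
      cons_val_zero, cons_val_one, cons_val_two, head_cons, tail_cons, Pi.zero_apply] at hj
    refine (mul_eq_zero.1 ?_).resolve_left (hw j)
    linear_combination hj
  obtain ⟨h0, h1, h2⟩ := quadratic_coeffs_eq_zero_of_eval_eq_zero hι hv hroot
  ext i
  fin_cases i <;> simp_all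

/-- The constraint matrix `C` of the weighted `L²`-minimization, whose rows are
`(h_j Δv)_j`, `(h_j v_j Δv)_j` and `(h_j v_j²/2 · Δv)_j` for positive weights `h_j`,
positive mesh `Δv` and at least three pairwise distinct velocity nodes `v_j`,
yields a symmetric positive definite (hence invertible) matrix `C·Cᵀ`. -/
theorem stmt_2 {n : ℕ} (hn : 3 ≤ n) (v : Fin n → ℝ) (hv : Function.Injective v)
    (h : Fin n → ℝ) (hh : ∀ j, 0 < h j) (Δv : ℝ) (hΔv : 0 < Δv) :
    let C : Matrix (Fin 3) (Fin n) ℝ :=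
      Matrix.of fun i j => h j * (![(1 : ℝ), v j, (v j) ^ 2 / 2] i) * Δv
    (C * Cᵀ).IsSymm ∧ (C * Cᵀ).PosDef ∧ IsUnit (C * Cᵀ) := by
  intro C
  have hC : C = Matrix.of fun i j => (h j * Δv) * ![(1 : ℝ), v j, v j ^ 2 / 2] i := by
    ext i j; simp only [C, of_apply]; ring
  have hpd : (C * Cᵀ).PosDef := by
    rw [← conjTranspose_eq_transpose_of_trivial]
    refine .mul_conjTranspose_self C ?_
    rw [hC]
    exact vecMul_injective_of_moment_rows (by simpa) hv fun j => (mul_pos (hh j) hΔv).ne'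
  exact ⟨transpose_mul C Cᵀ, hpd, hpd.isUnit⟩
end

section
/- Let ρ > 0, T > 0, U ∈ ℝ and let M(v) = ρ/√(2πT) · exp(−(v−U)²/(2T)). Let f : ℝ → ℝ be measurable with f ≥ 0, such that f, v·f, v²·f, f·log f and f·log M are integrable, and suppose f has the same first three moments as M: ∫_ℝ f dv = ρ, ∫_ℝ v·f(v) dv = ρU, ∫_ℝ v²·f(v) dv = ρU² + ρT. Then ∫_ℝ f(v)·log f(v) dv ≥ ∫_ℝ M(v)·log M(v) dv; i.e., among all nonnegative densities with prescribed mass, momentum and energy, the Maxwellian minimizes the entropy functional H(f) = ∫ f log f dv. -/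
/-!
Gibbs' inequality `x - y ≤ x log x - x log y` (for `x ≥ 0`, `y > 0`), integrated against `f` and
`M`, gives `∫ f log M ≤ ∫ f log f` once `f` and `M` have the same mass. Since `log M` is a
quadratic polynomial in `v - U`, the integral `∫ f log M` depends only on the mass and the second
central moment of `f`, which agree with those of `M`; hence `∫ f log M = ∫ M log M`.
-/

open MeasureTheory Real ProbabilityTheory
open scoped NNReal

theorem sub_le_mul_log_sub_mul_log {x y : ℝ} (hx : 0 ≤ x) (hy : 0 < y) :
    x - y ≤ x * log x - x * log y := by
  rcases hx.eq_or_lt with rfl | hx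
  · simpa using hy.le
  have h := Real.log_le_sub_one_of_pos (div_pos hy hx)
  rw [Real.log_div hy.ne' hx.ne', le_sub_iff_add_le, le_div_iff₀ hx] at h
  linarith

theorem integral_mul_log_le_integral_mul_log {α : Type*} [MeasurableSpace α] {μ : Measure α}
    {f g : α → ℝ} (hf_nonneg : ∀ x, 0 ≤ f x) (hg_pos : ∀ x, 0 < g x)
    (hf : Integrable f μ) (hg : Integrable g μ)
    (hflogf : Integrable (fun x => f x * log (f x)) μ)
    (hflogg : Integrable (fun x => f x * log (g x)) μ)
    (hfg : ∫ x, f x ∂μ = ∫ x, g x ∂μ) :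
    ∫ x, f x * log (g x) ∂μ ≤ ∫ x, f x * log (f x) ∂μ := by
  have h : ∫ x, f x - g x ∂μ ≤ ∫ x, f x * log (f x) - f x * log (g x) ∂μ :=
    integral_mono (hf.sub hg) (hflogf.sub hflogg)
      fun x => sub_le_mul_log_sub_mul_log (hf_nonneg x) (hg_pos x)
  rw [integral_sub hf hg, integral_sub hflogf hflogg, hfg, sub_self] at h
  linarith

theorem integrable_sq_sub_mul {f : ℝ → ℝ} (a : ℝ) (hf : Integrable f)
    (hvf : Integrable (fun v => v * f v)) (hv2f : Integrable (fun v => v ^ 2 * f v)) :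
    Integrable (fun v => (v - a) ^ 2 * f v) :=
  ((hv2f.sub (hvf.const_mul (2 * a))).add (hf.const_mul (a ^ 2))).congr
    (ae_of_all _ fun v => by simp only [Pi.add_apply, Pi.sub_apply]; ring)

theorem integral_sq_sub_mul {f : ℝ → ℝ} (a : ℝ) (hf : Integrable f)
    (hvf : Integrable (fun v => v * f v)) (hv2f : Integrable (fun v => v ^ 2 * f v)) :
    ∫ v, (v - a) ^ 2 * f v = (∫ v, v ^ 2 * f v) - 2 * a * (∫ v, v * f v) + a ^ 2 * ∫ v, f v := by
  have h : (fun v => (v - a) ^ 2 * f v)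
      = fun v => v ^ 2 * f v - 2 * a * (v * f v) + a ^ 2 * f v := by
    funext v; ring
  have h2 : Integrable (fun v => v ^ 2 * f v - 2 * a * (v * f v)) := hv2f.sub (hvf.const_mul _)
  rw [h, integral_add h2 (hf.const_mul _), integral_sub hv2f (hvf.const_mul _),
    integral_const_mul, integral_const_mul]

theorem integrable_sq_sub_mul_gaussianPDFReal (μ : ℝ) {v : ℝ≥0} (hv : v ≠ 0) :
    Integrable (fun x => (x - μ) ^ 2 * gaussianPDFReal μ v x) := by
  have h := (memLp_id_gaussianReal (μ := μ) (v := v) 2).sub (memLp_const μ) |>.integrable_sq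
  rw [gaussianReal_of_var_ne_zero _ hv, gaussianPDF_def,
    integrable_withDensity_iff_integrable_smul' (by fun_prop) (by simp)] at h
  refine h.congr (ae_of_all _ fun x => ?_)
  simp [ENNReal.toReal_ofReal (gaussianPDFReal_nonneg _ _ _), mul_comm]

theorem integral_sq_sub_mul_gaussianPDFReal (μ : ℝ) {v : ℝ≥0} (hv : v ≠ 0) :
    ∫ x, (x - μ) ^ 2 * gaussianPDFReal μ v x = v := by
  have h := variance_id_gaussianReal (μ := μ) (v := v)
  rw [variance_eq_integral aemeasurable_id] at h
  simp only [id] at h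
  rw [integral_id_gaussianReal, integral_gaussianReal_eq_integral_smul hv] at h
  simpa [mul_comm] using h

noncomputable def maxwellian (ρ U T v : ℝ) : ℝ := ρ / √(2 * π * T) * exp (-(v - U) ^ 2 / (2 * T))

section Maxwellian

variable {ρ U T : ℝ}

theorem maxwellian_eq_mul_gaussianPDFReal (hT : 0 ≤ T) :
    maxwellian ρ U T = fun v => ρ * gaussianPDFReal U T.toNNReal v := by
  ext v
  rw [maxwellian, gaussianPDFReal, Real.coe_toNNReal _ hT, div_eq_mul_inv, mul_assoc]

theorem maxwellian_pos (hρ : 0 < ρ) (hT : 0 < T) (v : ℝ) : 0 < maxwellian ρ U T v := by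
  unfold maxwellian
  positivity

theorem log_maxwellian (hρ : 0 < ρ) (hT : 0 < T) (v : ℝ) :
    log (maxwellian ρ U T v) = log (ρ / √(2 * π * T)) - (v - U) ^ 2 / (2 * T) := by
  rw [maxwellian, log_mul (by positivity) (exp_pos _).ne', log_exp]
  ring

theorem integrable_maxwellian (hT : 0 ≤ T) : Integrable (maxwellian ρ U T) := by
  rw [maxwellian_eq_mul_gaussianPDFReal hT]
  exact (integrable_gaussianPDFReal U _).const_mul ρ

theorem integral_maxwellian (hT : 0 < T) : ∫ v, maxwellian ρ U T v = ρ := by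
  rw [maxwellian_eq_mul_gaussianPDFReal hT.le, integral_const_mul,
    integral_gaussianPDFReal_eq_one U (by simpa using hT), mul_one]

theorem integrable_sq_sub_mul_maxwellian (hT : 0 < T) :
    Integrable (fun v => (v - U) ^ 2 * maxwellian ρ U T v) := by
  simp_rw [maxwellian_eq_mul_gaussianPDFReal hT.le, mul_left_comm _ ρ]
  exact (integrable_sq_sub_mul_gaussianPDFReal U (by simpa using hT)).const_mul ρ

theorem integral_sq_sub_mul_maxwellian (hT : 0 < T) :
    ∫ v, (v - U) ^ 2 * maxwellian ρ U T v = ρ * T := by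
  simp_rw [maxwellian_eq_mul_gaussianPDFReal hT.le, mul_left_comm _ ρ]
  rw [integral_const_mul, integral_sq_sub_mul_gaussianPDFReal U (by simpa using hT),
    Real.coe_toNNReal _ hT.le]

theorem integral_mul_log_maxwellian (hρ : 0 < ρ) (hT : 0 < T) {f : ℝ → ℝ} (hf : Integrable f)
    (hf₂ : Integrable (fun v => (v - U) ^ 2 * f v)) :
    ∫ v, f v * log (maxwellian ρ U T v)
      = log (ρ / √(2 * π * T)) * (∫ v, f v) - (∫ v, (v - U) ^ 2 * f v) / (2 * T) := by
  simp_rw [log_maxwellian hρ hT]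
  have h : (fun v => f v * (log (ρ / √(2 * π * T)) - (v - U) ^ 2 / (2 * T)))
      = fun v => log (ρ / √(2 * π * T)) * f v - (2 * T)⁻¹ * ((v - U) ^ 2 * f v) := by
    funext v; ring
  rw [h, integral_sub (hf.const_mul _) (hf₂.const_mul _), integral_const_mul, integral_const_mul]
  ring

end Maxwellian

theorem stmt_10_general (ρ T U : ℝ) (hρ : 0 < ρ) (hT : 0 < T) (M f : ℝ → ℝ)
    (hM : ∀ v, M v = ρ / Real.sqrt (2 * π * T) * Real.exp (-(v - U) ^ 2 / (2 * T)))
    (hfpos : ∀ v, 0 ≤ f v)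
    (hf : Integrable f) (hvf : Integrable (fun v => v * f v))
    (hv2f : Integrable (fun v => v ^ 2 * f v))
    (hflogf : Integrable (fun v => f v * Real.log (f v)))
    (hflogM : Integrable (fun v => f v * Real.log (M v)))
    (m0 : ∫ v : ℝ, f v = ρ) (m1 : ∫ v : ℝ, v * f v = ρ * U)
    (m2 : ∫ v : ℝ, v ^ 2 * f v = ρ * U ^ 2 + ρ * T) :
    ∫ v : ℝ, M v * Real.log (M v) ≤ ∫ v : ℝ, f v * Real.log (f v) := by
  obtain rfl : M = maxwellian ρ U T := funext hM
  have hf₂ : ∫ v, (v - U) ^ 2 * f v = ρ * T := by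
    rw [integral_sq_sub_mul U hf hvf hv2f, m0, m1, m2]
    ring
  have hM_log_M : ∫ v, maxwellian ρ U T v * log (maxwellian ρ U T v)
      = ∫ v, f v * log (maxwellian ρ U T v) := by
    rw [integral_mul_log_maxwellian hρ hT (integrable_maxwellian hT.le)
        (integrable_sq_sub_mul_maxwellian hT),
      integral_mul_log_maxwellian hρ hT hf (integrable_sq_sub_mul U hf hvf hv2f),
      integral_maxwellian hT, integral_sq_sub_mul_maxwellian hT, m0, hf₂]
  rw [hM_log_M]
  exact integral_mul_log_le_integral_mul_log hfpos (maxwellian_pos hρ hT) hf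
    (integrable_maxwellian hT.le) hflogf hflogM (by rw [m0, integral_maxwellian hT])

/-- Entropy-minimization property of the Maxwellian: among all nonnegative densities `f`
with the same mass, momentum and energy as the Maxwellian `M`, the Maxwellian minimizes
the entropy functional `H(f) = ∫ f log f dv` (with the convention `0·log 0 = 0`,
which holds automatically since `Real.log 0 = 0`). -/
theorem stmt_10 (ρ T U : ℝ) (hρ : 0 < ρ) (hT : 0 < T) (M f : ℝ → ℝ)
    (hM : ∀ v, M v = ρ / Real.sqrt (2 * π * T) * Real.exp (-(v - U) ^ 2 / (2 * T)))
    (hfmeas : Measurable f) (hfpos : ∀ v, 0 ≤ f v)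
    (hf : Integrable f) (hvf : Integrable (fun v => v * f v))
    (hv2f : Integrable (fun v => v ^ 2 * f v))
    (hflogf : Integrable (fun v => f v * Real.log (f v)))
    (hflogM : Integrable (fun v => f v * Real.log (M v)))
    (m0 : ∫ v : ℝ, f v = ρ) (m1 : ∫ v : ℝ, v * f v = ρ * U)
    (m2 : ∫ v : ℝ, v ^ 2 * f v = ρ * U ^ 2 + ρ * T) :
    ∫ v : ℝ, M v * Real.log (M v) ≤ ∫ v : ℝ, f v * Real.log (f v) :=
  stmt_10_general ρ T U hρ hT M f hM hfpos hf hvf hv2f hflogf hflogM m0 m1 m2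
end

section
/- Let c₀₀, c₁₀, c₀₁ ∈ ℝ and p(x,y) = c₀₀ + c₁₀·x + c₀₁·y, and let q(x,y) = c₀₀·x + (c₁₀/2)·x² + c₀₁·x·y. Let y₁ < y₂, set Δy = y₂ − y₁, and let ℓ, r : ℝ → ℝ be affine functions with ℓ(y) ≤ r(y) for all y ∈ [y₁, y₂]. Then for the trapezoid Ω = {(x,y) : y₁ ≤ y ≤ y₂, ℓ(y) ≤ x ≤ r(y)}, ∫∫_Ω p(x,y) dx dy = Δy·( ∫₀¹ q(r(y₁ + tΔy), y₁ + tΔy) dt − ∫₀¹ q(ℓ(y₁ + tΔy), y₁ + tΔy) dt ). -/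
/-!
Slicing Ω horizontally (Fubini), each slice `[ℓ y, r y]` contributes `q (r y) y - q (ℓ y) y` by the
fundamental theorem of calculus, since `∂q/∂x = p`; the substitution `y = y₁ + tΔy` then rescales
the remaining integral over `[y₁, y₂]` to `Δy` times an integral over `[0, 1]`.
-/

open MeasureTheory Set

variable {E : Type*} [NormedAddCommGroup E] [NormedSpace ℝ E]

section BetweenGraphs

variable {l r : ℝ → ℝ} {s : Set ℝ}

theorem isCompact_between_graphs (hs : IsCompact s) (hl : Continuous l) (hr : Continuous r) :
    IsCompact {xy : ℝ × ℝ | xy.2 ∈ s ∧ xy.1 ∈ Icc (l xy.2) (r xy.2)} := by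
  obtain ⟨m, hm⟩ := hs.bddBelow_image hl.continuousOn
  obtain ⟨M, hM⟩ := hs.bddAbove_image hr.continuousOn
  have hclosed : IsClosed {xy : ℝ × ℝ | xy.2 ∈ s ∧ xy.1 ∈ Icc (l xy.2) (r xy.2)} :=
    (hs.isClosed.preimage continuous_snd).inter
      ((isClosed_le (hl.comp continuous_snd) continuous_fst).inter
        (isClosed_le continuous_fst (hr.comp continuous_snd)))
  refine ((isCompact_Icc (a := m) (b := M)).prod hs).of_isClosed_subset hclosed ?_
  rintro ⟨x, y⟩ ⟨hy, hlx, hxr⟩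
  exact ⟨⟨(hm ⟨y, hy, rfl⟩).trans hlx, hxr.trans (hM ⟨y, hy, rfl⟩)⟩, hy⟩

theorem setIntegral_between_graphs (hs : MeasurableSet s) (hl : Measurable l)
    (hr : Measurable r) {f : ℝ × ℝ → E}
    (hf : IntegrableOn f {xy : ℝ × ℝ | xy.2 ∈ s ∧ xy.1 ∈ Icc (l xy.2) (r xy.2)}) :
    ∫ xy in {xy : ℝ × ℝ | xy.2 ∈ s ∧ xy.1 ∈ Icc (l xy.2) (r xy.2)}, f xy =
      ∫ y in s, ∫ x in Icc (l y) (r y), f (x, y) := by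
  set Ω := {xy : ℝ × ℝ | xy.2 ∈ s ∧ xy.1 ∈ Icc (l xy.2) (r xy.2)}
  have hΩ : MeasurableSet Ω :=
    (hs.preimage measurable_snd).inter
      ((measurableSet_le (hl.comp measurable_snd) measurable_fst).inter
        (measurableSet_le measurable_fst (hr.comp measurable_snd)))
  have hslice : ∀ y, ∫ x, Ω.indicator f (x, y) =
      s.indicator (fun y => ∫ x in Icc (l y) (r y), f (x, y)) y := by
    intro y
    by_cases hy : y ∈ s
    · rw [indicator_of_mem hy, ← integral_indicator measurableSet_Icc]
      congr 1 with x
      simp [Ω, indicator, hy]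
    · simp [Ω, indicator, hy]
  rw [← integral_indicator hΩ, Measure.volume_eq_prod,
    integral_prod_symm _ (hf.integrable_indicator hΩ)]
  simp_rw [hslice]
  exact integral_indicator hs

end BetweenGraphs

theorem sub_smul_integral_comp_add_mul_sub (f : ℝ → E) (a b : ℝ) :
    (b - a) • ∫ t in (0 : ℝ)..1, f (a + t * (b - a)) = ∫ y in a..b, f y := by
  simp_rw [mul_comm _ (b - a)]
  rw [intervalIntegral.smul_integral_comp_add_mul]
  congr 1 <;> ring

theorem integral_affine_eq_sub (c00 c10 c01 y u v : ℝ) :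
    ∫ x in u..v, c00 + c10 * x + c01 * y =
      (c00 * v + c10 / 2 * v ^ 2 + c01 * v * y) - (c00 * u + c10 / 2 * u ^ 2 + c01 * u * y) := by
  refine intervalIntegral.integral_eq_sub_of_hasDerivAt
    (f := fun x => c00 * x + c10 / 2 * x ^ 2 + c01 * x * y) (fun x _ => ?_)
    ((by fun_prop : Continuous fun x : ℝ => c00 + c10 * x + c01 * y).intervalIntegrable _ _)
  have := (((hasDerivAt_id x).const_mul c00).add ((hasDerivAt_pow 2 x).const_mul (c10 / 2))).add
    (((hasDerivAt_id x).const_mul c01).mul_const y)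
  exact this.congr_deriv (by simp; ring)

/-- Exact integration of an affine polynomial `p(x,y) = c₀₀ + c₁₀x + c₀₁y` over a trapezoid
with horizontal sides at heights `y₁ < y₂` and affine left/right edges `ℓ, r`: via the
`x`-antiderivative `q` (with `∂q/∂x = p`), the area integral reduces to the two
edge contributions weighted by `Δy = y₂ − y₁`. -/
theorem stmt_14 (c00 c10 c01 y1 y2 : ℝ) (hy : y1 < y2) (l r : ℝ → ℝ)
    (hl : ∃ a b : ℝ, ∀ y, l y = a * y + b) (hr : ∃ a b : ℝ, ∀ y, r y = a * y + b)
    (hlr : ∀ y ∈ Set.Icc y1 y2, l y ≤ r y) :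
    let p : ℝ → ℝ → ℝ := fun x y => c00 + c10 * x + c01 * y
    let q : ℝ → ℝ → ℝ := fun x y => c00 * x + c10 / 2 * x ^ 2 + c01 * x * y
    let Δy : ℝ := y2 - y1
    let Ω : Set (ℝ × ℝ) := {xy | y1 ≤ xy.2 ∧ xy.2 ≤ y2 ∧ l xy.2 ≤ xy.1 ∧ xy.1 ≤ r xy.2}
    ∫ xy in Ω, p xy.1 xy.2 =
      Δy * ((∫ t in (0:ℝ)..1, q (r (y1 + t * Δy)) (y1 + t * Δy)) -
            (∫ t in (0:ℝ)..1, q (l (y1 + t * Δy)) (y1 + t * Δy))) := by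
  intro p q Δy Ω
  have hlc : Continuous l := by obtain ⟨a, b, h⟩ := hl; rw [funext h]; fun_prop
  have hrc : Continuous r := by obtain ⟨a, b, h⟩ := hr; rw [funext h]; fun_prop
  have hΩ : Ω = {xy : ℝ × ℝ | xy.2 ∈ Icc y1 y2 ∧ xy.1 ∈ Icc (l xy.2) (r xy.2)} := by
    ext; simp [Ω, and_assoc]
  have hinner : ∀ y ∈ Icc y1 y2, ∫ x in Icc (l y) (r y), p x y = q (r y) y - q (l y) y := by
    intro y hy
    rw [integral_Icc_eq_integral_Ioc, ← intervalIntegral.integral_of_le (hlr y hy)]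
    exact integral_affine_eq_sub c00 c10 c01 y _ _
  have hq : ∀ g : ℝ → ℝ, Continuous g → IntervalIntegrable (fun y => q (g y) y) volume y1 y2 :=
    fun g hg => Continuous.intervalIntegrable (by fun_prop) _ _
  rw [hΩ, setIntegral_between_graphs measurableSet_Icc hlc.measurable hrc.measurable
      (ContinuousOn.integrableOn_compact (isCompact_between_graphs isCompact_Icc hlc hrc)
        (by simp only [p]; fun_prop)),
    setIntegral_congr_fun measurableSet_Icc hinner, integral_Icc_eq_integral_Ioc,
    ← intervalIntegral.integral_of_le hy.le,
    intervalIntegral.integral_sub (hq r hrc) (hq l hlc),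
    ← sub_smul_integral_comp_add_mul_sub (fun y => q (r y) y),
    ← sub_smul_integral_comp_add_mul_sub (fun y => q (l y) y), smul_eq_mul, smul_eq_mul, mul_sub]
end

section
/- Let Δx > 0, x_i ∈ ℝ, x_{i+1} = x_i + Δx, k ∈ ℕ, and let R_i(x) = Σ_{ℓ=0}^{k} a_ℓ·(x − x_i)^ℓ/ℓ! and R_{i+1}(x) = Σ_{ℓ=0}^{k} b_ℓ·(x − x_{i+1})^ℓ/ℓ! be polynomials with real coefficients a_ℓ, b_ℓ. Then for every θ ∈ [0, 1), (1/Δx)·( ∫_{x_i + (θ−1/2)Δx}^{x_i + Δx/2} R_i(x) dx + ∫_{x_i + Δx/2}^{x_i + (θ+1/2)Δx} R_{i+1}(x) dx ) = Σ_{ℓ=0}^{k} Δx^ℓ·( α_ℓ(θ)·a_ℓ + β_ℓ(θ)·b_ℓ ), where α_ℓ(θ) = (1 − (2θ−1)^{ℓ+1})/(2^{ℓ+1}(ℓ+1)!) and β_ℓ(θ) = ((2θ−1)^{ℓ+1} − (−1)^{ℓ+1})/(2^{ℓ+1}(ℓ+1)!). -/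
open MeasureTheory intervalIntegral Finset

theorem integral_sub_pow_div_factorial (c A B : ℝ) (ℓ : ℕ) :
    ∫ x in A..B, (x - c) ^ ℓ / (ℓ.factorial : ℝ) =
      ((B - c) ^ (ℓ + 1) - (A - c) ^ (ℓ + 1)) / ((ℓ + 1).factorial : ℝ) := by
  rw [intervalIntegral.integral_div, integral_comp_sub_right (· ^ ℓ) c,
    integral_pow, Nat.factorial_succ, Nat.cast_mul, div_div, Nat.cast_succ]

theorem integral_sum_mul_sub_pow_div_factorial (c A B : ℝ) (k : ℕ) (a : ℕ → ℝ) :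
    ∫ x in A..B, ∑ ℓ ∈ range (k + 1), a ℓ * (x - c) ^ ℓ / (ℓ.factorial : ℝ) =
      ∑ ℓ ∈ range (k + 1),
        a ℓ * (((B - c) ^ (ℓ + 1) - (A - c) ^ (ℓ + 1)) / ((ℓ + 1).factorial : ℝ)) := by
  rw [integral_finsetSum fun ℓ _ => (by fun_prop : Continuous _).intervalIntegrable _ _]
  refine sum_congr rfl fun ℓ _ => ?_
  simp_rw [mul_div_assoc]
  rw [intervalIntegral.integral_const_mul, integral_sub_pow_div_factorial]

theorem stmt_16_general (Δx : ℝ) (hΔx : 0 < Δx) (xi : ℝ) (k : ℕ) (a b : ℕ → ℝ)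
    (θ : ℝ) :
    let xip1 : ℝ := xi + Δx
    let Ri : ℝ → ℝ := fun x => ∑ ℓ ∈ Finset.range (k + 1), a ℓ * (x - xi) ^ ℓ / (ℓ.factorial : ℝ)
    let Rip1 : ℝ → ℝ :=
      fun x => ∑ ℓ ∈ Finset.range (k + 1), b ℓ * (x - xip1) ^ ℓ / (ℓ.factorial : ℝ)
    (1 / Δx) * ((∫ x in (xi + (θ - 1/2) * Δx)..(xi + Δx / 2), Ri x) +
        (∫ x in (xi + Δx / 2)..(xi + (θ + 1/2) * Δx), Rip1 x)) =
      ∑ ℓ ∈ Finset.range (k + 1), Δx ^ ℓ *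
        ((1 - (2 * θ - 1) ^ (ℓ + 1)) / (2 ^ (ℓ + 1) * ((ℓ + 1).factorial : ℝ)) * a ℓ +
         ((2 * θ - 1) ^ (ℓ + 1) - (-1 : ℝ) ^ (ℓ + 1)) /
            (2 ^ (ℓ + 1) * ((ℓ + 1).factorial : ℝ)) * b ℓ) := by
  intro xip1 Ri Rip1
  simp only [Ri, Rip1, integral_sum_mul_sub_pow_div_factorial, ← sum_add_distrib, mul_sum]
  refine sum_congr rfl fun ℓ _ => ?_
  -- measured from the cell centres, every endpoint is a multiple of `Δx`, so term `ℓ` scales as `Δx ^ (ℓ + 1)`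
  have hi_right : xi + Δx / 2 - xi = (1 / 2) * Δx := by ring
  have hi_left : xi + (θ - 1 / 2) * Δx - xi = ((2 * θ - 1) / 2) * Δx := by ring
  have hip1_left : xi + Δx / 2 - xip1 = (-1 / 2) * Δx := by ring
  have hip1_right : xi + (θ + 1 / 2) * Δx - xip1 = ((2 * θ - 1) / 2) * Δx := by ring
  rw [hi_right, hi_left, hip1_left, hip1_right]
  simp only [mul_pow, div_pow]
  field_simp
  ring

/-- Sliding-average identity of the conservative reconstruction: the average over the window
of width `Δx` centered at `x_i + θΔx` of the piecewise polynomial equal to `R_i` on cell `i`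
and `R_{i+1}` on cell `i+1` equals `Σ_ℓ Δx^ℓ (α_ℓ(θ)·a_ℓ + β_ℓ(θ)·b_ℓ)`. -/
theorem stmt_16 (Δx : ℝ) (hΔx : 0 < Δx) (xi : ℝ) (k : ℕ) (a b : ℕ → ℝ)
    (θ : ℝ) (hθ : θ ∈ Set.Ico (0 : ℝ) 1) :
    let xip1 : ℝ := xi + Δx
    let Ri : ℝ → ℝ := fun x => ∑ ℓ ∈ Finset.range (k + 1), a ℓ * (x - xi) ^ ℓ / (ℓ.factorial : ℝ)
    let Rip1 : ℝ → ℝ :=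
      fun x => ∑ ℓ ∈ Finset.range (k + 1), b ℓ * (x - xip1) ^ ℓ / (ℓ.factorial : ℝ)
    (1 / Δx) * ((∫ x in (xi + (θ - 1/2) * Δx)..(xi + Δx / 2), Ri x) +
        (∫ x in (xi + Δx / 2)..(xi + (θ + 1/2) * Δx), Rip1 x)) =
      ∑ ℓ ∈ Finset.range (k + 1), Δx ^ ℓ *
        ((1 - (2 * θ - 1) ^ (ℓ + 1)) / (2 ^ (ℓ + 1) * ((ℓ + 1).factorial : ℝ)) * a ℓ +
         ((2 * θ - 1) ^ (ℓ + 1) - (-1 : ℝ) ^ (ℓ + 1)) /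
            (2 ^ (ℓ + 1) * ((ℓ + 1).factorial : ℝ)) * b ℓ) :=
  stmt_16_general Δx hΔx xi k a b θ
end

section
/- Let N ≥ 1, Δx > 0, x_i = i·Δx for i ∈ ℤ, and let (R_i)_{i∈ℤ} be a family of continuous (e.g. polynomial) functions ℝ → ℝ that is N-periodic in the sense R_{i+N}(x) = R_i(x − N·Δx). Define the cell averages u_i = (1/Δx)∫_{x_i − Δx/2}^{x_i + Δx/2} R_i(x) dx and, for θ ∈ [0,1), the sliding averages Q_i(θ) = (1/Δx)·( ∫_{x_i + (θ−1/2)Δx}^{x_i + Δx/2} R_i(x) dx + ∫_{x_i + Δx/2}^{x_i + (θ+1/2)Δx} R_{i+1}(x) dx ). Then Σ_{i=0}^{N−1} Q_i(θ) = Σ_{i=0}^{N−1} u_i for every θ ∈ [0,1). -/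
/-!
Write `G i` for the integral of `R i` from the left edge of cell `i` to the shifted point
`x_i + (θ - 1/2) Δx`. Splitting the first integral of `Q_i` at that point gives
`Δx Q_i = Δx u_i + G (i + 1) - G i`, so the sum over a period telescopes to
`Σ u_i + (G N - G 0) / Δx`, and `G N = G 0` because cell `N` is cell `0` translated by `N Δx`.
-/

open MeasureTheory intervalIntegral Finset

theorem sum_range_sliding_integral_eq {f : ℕ → ℝ → ℝ} (e s : ℕ → ℝ)
    (hf : ∀ i a b, IntervalIntegrable (f i) volume a b) (N : ℕ) :
    ∑ i ∈ range N, ((∫ x in s i..e (i + 1), f i x) + ∫ x in e (i + 1)..s (i + 1), f (i + 1) x)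
      = ∑ i ∈ range N, (∫ x in e i..e (i + 1), f i x)
        + ((∫ x in e N..s N, f N x) - ∫ x in e 0..s 0, f 0 x) := by
  have hsplit : ∀ i, (∫ x in s i..e (i + 1), f i x)
      = (∫ x in e i..e (i + 1), f i x) - ∫ x in e i..s i, f i x := fun i =>
    (integral_interval_sub_left (hf _ _ _) (hf _ _ _)).symm
  simp_rw [hsplit, sub_add_eq_add_sub, add_sub_assoc, sum_add_distrib,
    sum_range_sub (fun i => ∫ x in e i..s i, f i x)]

theorem integral_add_period {R : ℤ → ℝ → ℝ} {N : ℤ} {L : ℝ}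
    (hper : ∀ i x, R (i + N) x = R i (x - L)) (i : ℤ) (a b : ℝ) :
    ∫ x in a + L..b + L, R (i + N) x = ∫ x in a..b, R i x := by
  simp_rw [hper, integral_comp_sub_right, add_sub_cancel_right]

theorem stmt_17_general (N : ℕ) (Δx : ℝ)
    (R : ℤ → ℝ → ℝ) (hcont : ∀ i, Continuous (R i))
    (hper : ∀ (i : ℤ) (x : ℝ), R (i + (N : ℤ)) x = R i (x - (N : ℝ) * Δx))
    (θ : ℝ) :
    (∑ i ∈ Finset.range N, (1 / Δx) *
        ((∫ x in ((i : ℝ) * Δx + (θ - 1/2) * Δx)..((i : ℝ) * Δx + Δx / 2), R (i : ℤ) x) +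
         (∫ x in ((i : ℝ) * Δx + Δx / 2)..((i : ℝ) * Δx + (θ + 1/2) * Δx), R ((i : ℤ) + 1) x)))
      = ∑ i ∈ Finset.range N, (1 / Δx) *
          ∫ x in ((i : ℝ) * Δx - Δx / 2)..((i : ℝ) * Δx + Δx / 2), R (i : ℤ) x := by
  have hsum := sum_range_sliding_integral_eq (f := fun i : ℕ => R i)
    (fun i => i * Δx - Δx / 2) (fun i => i * Δx + (θ - 1 / 2) * Δx)
    (fun i _ _ => (hcont i).intervalIntegrable _ _) N
  have hperiod : ∫ x in (N * Δx - Δx / 2)..(N * Δx + (θ - 1 / 2) * Δx), R N x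
      = ∫ x in (0 * Δx - Δx / 2)..(0 * Δx + (θ - 1 / 2) * Δx), R 0 x := by
    rw [← zero_add (N : ℤ)]
    convert integral_add_period hper 0 (0 * Δx - Δx / 2) (0 * Δx + (θ - 1 / 2) * Δx) using 2 <;>
      ring
  simp only [Nat.cast_zero, hperiod, sub_self, add_zero] at hsum
  rw [← mul_sum, ← mul_sum]
  congr 1
  refine Eq.trans (sum_congr rfl fun i _ => ?_) (hsum.trans (sum_congr rfl fun i _ => ?_)) <;>
    push_cast <;> congr 2 <;> ring

/-- Discrete conservation of the conservative semi-Lagrangian reconstruction with periodic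
boundary conditions: for an `N`-periodic family of continuous cell polynomials `R_i`, the sum
of the sliding averages `Q_i(θ)` over one period equals the sum of the cell averages `u_i`,
for every shift `θ ∈ [0,1)`. -/
theorem stmt_17 (N : ℕ) (hN : 1 ≤ N) (Δx : ℝ) (hΔx : 0 < Δx)
    (R : ℤ → ℝ → ℝ) (hcont : ∀ i, Continuous (R i))
    (hper : ∀ (i : ℤ) (x : ℝ), R (i + (N : ℤ)) x = R i (x - (N : ℝ) * Δx))
    (θ : ℝ) (hθ : θ ∈ Set.Ico (0 : ℝ) 1) :
    (∑ i ∈ Finset.range N, (1 / Δx) *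
        ((∫ x in ((i : ℝ) * Δx + (θ - 1/2) * Δx)..((i : ℝ) * Δx + Δx / 2), R (i : ℤ) x) +
         (∫ x in ((i : ℝ) * Δx + Δx / 2)..((i : ℝ) * Δx + (θ + 1/2) * Δx), R ((i : ℤ) + 1) x)))
      = ∑ i ∈ Finset.range N, (1 / Δx) *
          ∫ x in ((i : ℝ) * Δx - Δx / 2)..((i : ℝ) * Δx + Δx / 2), R (i : ℤ) x :=
  stmt_17_general N Δx R hcont hper θ
end

section
/- Let J be a nonempty finite index set, v : J → ℝ, Δv > 0, λ > 0, and g : J → ℝ. Define ρ = Σ_j g_j·Δv, and assume ρ > 0; define U = (Σ_j v_j·g_j·Δv)/ρ and T = (Σ_j (v_j − U)²·g_j·Δv)/ρ, and assume T > 0. Let M_j = ρ/√(2πT)·exp(−(v_j − U)²/(2T)), and assume the quadrature-exactness conditions Σ_j M_j·Δv = ρ, Σ_j v_j·M_j·Δv = ρU and Σ_j v_j²·M_j·Δv = Σ_j v_j²·g_j·Δv. Then f := (g + λ·M)/(1 + λ) satisfies: (i) Σ_j f_j·Δv = ρ, Σ_j v_j·f_j·Δv = ρU and Σ_j v_j²·f_j·Δv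 = Σ_j v_j²·g_j·Δv (the discrete mass, momentum and energy of f equal those of g); (ii) the discrete Maxwellian built from the moments of f coincides with M, so f solves the implicit relaxation equation f = g + λ·(M(f) − f) componentwise. -/
/-!
The Maxwellian `M(f)` depends on `f` only through its discrete mass, momentum and energy,
and these are linear in `f`. The quadrature exactness says that `M = M(g)` has the same
three moments as `g`, hence so does `f = (g + λM)/(1 + λ)`. Therefore `M(f) = M(g) = M`,
and the implicit equation `f = g + λ(M(f) − f)` becomes the linear equation
`f = g + λ(M − f)`, whose solution is `f`.
-/

open Real Finset

noncomputable section

namespace DiscreteBGK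

variable {J : Type*} [Fintype J]

section Moments

variable (v : J → ℝ) (Δv : ℝ)

def density (f : J → ℝ) : ℝ := ∑ j, f j * Δv

def meanVelocity (f : J → ℝ) : ℝ := (∑ j, v j * f j * Δv) / density Δv f

def temperature (f : J → ℝ) : ℝ :=
  (∑ j, (v j - meanVelocity v Δv f) ^ 2 * f j * Δv) / density Δv f

def maxwellian (f : J → ℝ) (j : J) : ℝ :=
  density Δv f / √(2 * π * temperature v Δv f) *
    exp (-(v j - meanVelocity v Δv f) ^ 2 / (2 * temperature v Δv f))

theorem sum_sub_sq_mul_mul (f : J → ℝ) (c : ℝ) :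
    ∑ j, (v j - c) ^ 2 * f j * Δv =
      ∑ j, v j ^ 2 * f j * Δv - 2 * c * ∑ j, v j * f j * Δv + c ^ 2 * ∑ j, f j * Δv := by
  simp only [mul_sum, ← sum_sub_distrib, ← sum_add_distrib]
  exact sum_congr rfl fun j _ => by ring

theorem maxwellian_eq_of_moments_eq {f g : J → ℝ}
    (hmass : ∑ j, f j * Δv = ∑ j, g j * Δv)
    (hmom : ∑ j, v j * f j * Δv = ∑ j, v j * g j * Δv)
    (hen : ∑ j, v j ^ 2 * f j * Δv = ∑ j, v j ^ 2 * g j * Δv) :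
    maxwellian v Δv f = maxwellian v Δv g := by
  have hρ : density Δv f = density Δv g := hmass
  have hU : meanVelocity v Δv f = meanVelocity v Δv g := by
    rw [meanVelocity, meanVelocity, hmom, hρ]
  have hT : temperature v Δv f = temperature v Δv g := by
    rw [temperature, temperature, hU, sum_sub_sq_mul_mul, sum_sub_sq_mul_mul, hmass, hmom, hen,
      hρ]
  funext j
  simp only [maxwellian, hρ, hU, hT]

end Moments

section Relaxation

variable {Δv lam : ℝ} {f g M : J → ℝ}

theorem sum_mul_mul_eq_of_relax (w : J → ℝ) (hlam : 1 + lam ≠ 0)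
    (hf : ∀ j, f j = (g j + lam * M j) / (1 + lam))
    (hM : ∑ j, w j * M j * Δv = ∑ j, w j * g j * Δv) :
    ∑ j, w j * f j * Δv = ∑ j, w j * g j * Δv := by
  have hterm : ∀ j, w j * f j * Δv = (w j * g j * Δv + lam * (w j * M j * Δv)) / (1 + lam) :=
    fun j => by rw [hf]; ring
  rw [sum_congr rfl fun j _ => hterm j, ← sum_div, sum_add_distrib, ← mul_sum, hM,
    div_eq_iff hlam]
  ring

theorem eq_add_mul_sub_of_eq_div {a b c : ℝ} (hlam : 1 + lam ≠ 0)
    (h : a = (b + lam * c) / (1 + lam)) : a = b + lam * (c - a) := by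
  rw [eq_div_iff hlam] at h
  linarith

end Relaxation

end DiscreteBGK

end

open DiscreteBGK in
theorem stmt_18_general {J : Type*} [Fintype J]
    (v : J → ℝ) (Δv lam : ℝ) (hlam : 0 < lam) (g : J → ℝ)
    (ρ : ℝ) (hρdef : ρ = ∑ j, g j * Δv) (hρpos : 0 < ρ)
    (U : ℝ) (hU : U = (∑ j, v j * g j * Δv) / ρ)
    (T : ℝ) (hT : T = (∑ j, (v j - U) ^ 2 * g j * Δv) / ρ)
    (M : J → ℝ)
    (hM : ∀ j, M j = ρ / Real.sqrt (2 * π * T) * Real.exp (-(v j - U) ^ 2 / (2 * T)))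
    (hq1 : ∑ j, M j * Δv = ρ)
    (hq2 : ∑ j, v j * M j * Δv = ρ * U)
    (hq3 : ∑ j, (v j) ^ 2 * M j * Δv = ∑ j, (v j) ^ 2 * g j * Δv)
    (f : J → ℝ) (hf : ∀ j, f j = (g j + lam * M j) / (1 + lam)) :
    ((∑ j, f j * Δv = ρ) ∧ (∑ j, v j * f j * Δv = ρ * U) ∧
      (∑ j, (v j) ^ 2 * f j * Δv = ∑ j, (v j) ^ 2 * g j * Δv)) ∧
    (let ρf : ℝ := ∑ j, f j * Δv
     let Uf : ℝ := (∑ j, v j * f j * Δv) / ρf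
     let Tf : ℝ := (∑ j, (v j - Uf) ^ 2 * f j * Δv) / ρf
     let Mf : J → ℝ := fun j => ρf / Real.sqrt (2 * π * Tf) * Real.exp (-(v j - Uf) ^ 2 / (2 * Tf))
     (∀ j, Mf j = M j) ∧ ∀ j, f j = g j + lam * (Mf j - f j)) := by
  have hlam' : 1 + lam ≠ 0 := by positivity
  have hρU : ρ * U = ∑ j, v j * g j * Δv := by rw [hU, mul_div_cancel₀ _ hρpos.ne']
  have hMg : M = maxwellian v Δv g := by
    subst hT hU hρdef
    exact funext hM
  have hmass : ∑ j, f j * Δv = ρ := by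
    simpa only [one_mul, hρdef] using
      sum_mul_mul_eq_of_relax (fun _ => 1) hlam' hf (by simpa only [one_mul, ← hρdef] using hq1)
  have hmom : ∑ j, v j * f j * Δv = ρ * U :=
    hρU ▸ sum_mul_mul_eq_of_relax v hlam' hf (hq2.trans hρU)
  have hen := sum_mul_mul_eq_of_relax (fun j => v j ^ 2) hlam' hf hq3
  have hMf : maxwellian v Δv f = M :=
    hMg ▸ maxwellian_eq_of_moments_eq v Δv (hmass.trans hρdef) (hmom.trans hρU) hen
  refine ⟨⟨hmass, hmom, hen⟩, fun j => congrFun hMf j, fun j => ?_⟩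
  change f j = g j + lam * (maxwellian v Δv f j - f j)
  rw [hMf]
  exact eq_add_mul_sub_of_eq_div hlam' (hf j)

/-- Explicit solvability of the implicit relaxation step of the semi-Lagrangian BGK scheme:
with `λ = Δt/ε`, the convex combination `f = (g + λM)/(1 + λ)` of the transported data `g`
and the discrete Maxwellian `M` built from the moments of `g` (assuming quadrature
exactness of the moments of `M`) has the same discrete mass, momentum and energy as `g`;
moreover the discrete Maxwellian built from the moments of `f` coincides with `M`, so `f`
solves `f = g + λ(M(f) − f)` componentwise. -/
theorem stmt_18 {J : Type*} [Fintype J] [Nonempty J]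
    (v : J → ℝ) (Δv lam : ℝ) (hΔv : 0 < Δv) (hlam : 0 < lam) (g : J → ℝ)
    (ρ : ℝ) (hρdef : ρ = ∑ j, g j * Δv) (hρpos : 0 < ρ)
    (U : ℝ) (hU : U = (∑ j, v j * g j * Δv) / ρ)
    (T : ℝ) (hT : T = (∑ j, (v j - U) ^ 2 * g j * Δv) / ρ) (hTpos : 0 < T)
    (M : J → ℝ)
    (hM : ∀ j, M j = ρ / Real.sqrt (2 * π * T) * Real.exp (-(v j - U) ^ 2 / (2 * T)))
    (hq1 : ∑ j, M j * Δv = ρ)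
    (hq2 : ∑ j, v j * M j * Δv = ρ * U)
    (hq3 : ∑ j, (v j) ^ 2 * M j * Δv = ∑ j, (v j) ^ 2 * g j * Δv)
    (f : J → ℝ) (hf : ∀ j, f j = (g j + lam * M j) / (1 + lam)) :
    ((∑ j, f j * Δv = ρ) ∧ (∑ j, v j * f j * Δv = ρ * U) ∧
      (∑ j, (v j) ^ 2 * f j * Δv = ∑ j, (v j) ^ 2 * g j * Δv)) ∧
    (let ρf : ℝ := ∑ j, f j * Δv
     let Uf : ℝ := (∑ j, v j * f j * Δv) / ρf
     let Tf : ℝ := (∑ j, (v j - Uf) ^ 2 * f j * Δv) / ρf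
     let Mf : J → ℝ := fun j => ρf / Real.sqrt (2 * π * Tf) * Real.exp (-(v j - Uf) ^ 2 / (2 * Tf))
     (∀ j, Mf j = M j) ∧ ∀ j, f j = g j + lam * (Mf j - f j)) :=
  stmt_18_general v Δv lam hlam g ρ hρdef hρpos U hU T hT M hM hq1 hq2 hq3 f hf
end
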